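/- arXiv:1810.03214 — 3 statements merged into one kernel-verified Lean document; each statement's English description precedes it below -/
import Mathlib

section
/- If M ∈ U_s(p,q) and λ is a nonzero (real) eigenvalue of the Hermitian matrix M + I_{p,q}, then |λ| ≥ 2. -/
open Matrix

theorem eigenvalue_abs_ge_two (p q : ℕ)
    (M : Matrix (Fin p ⊕ Fin q) (Fin p ⊕ Fin q) ℂ)
    (hM : Mᴴ = M)
    (h : M * Matrix.fromBlocks 1 0 0 (-1) * M = Matrix.fromBlocks 1 0 0 (-1))
    (lam : ℝ) (hlam : lam ≠ 0)
    (v : Fin p ⊕ Fin q → ℂ) (hv : v ≠ 0)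
    (heig : (M + Matrix.fromBlocks 1 0 0 (-1)) *ᵥ v = (lam : ℂ) • v) :
    2 ≤ |lam| := by
  set J : Matrix (Fin p ⊕ Fin q) (Fin p ⊕ Fin q) ℂ := Matrix.fromBlocks 1 0 0 (-1) with hJ
  set A : Matrix (Fin p ⊕ Fin q) (Fin p ⊕ Fin q) ℂ := M + J with hA
  have hJdiag : J = Matrix.diagonal (Sum.elim (fun _ : Fin p => (1:ℂ)) (fun _ : Fin q => -1)) := by
    rw [hJ, show (1 : Matrix (Fin p) (Fin p) ℂ) = Matrix.diagonal (fun _ => 1) by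
        ext i j; by_cases hij : i = j <;> simp [Matrix.one_apply, hij],
      show (-1 : Matrix (Fin q) (Fin q) ℂ) = Matrix.diagonal (fun _ => -1) by
        ext i j; by_cases hij : i = j <;>
          simp [Matrix.one_apply, Matrix.neg_apply, hij],
      Matrix.fromBlocks_diagonal]
  have hJ2 : J * J = 1 := by
    rw [hJ]
    simp [Matrix.fromBlocks_multiply, ← Matrix.fromBlocks_one]
  have hJH : Jᴴ = J := by
    rw [hJ]
    simp [Matrix.fromBlocks_conjTranspose]
  have hAH : Aᴴ = A := by rw [hA, Matrix.conjTranspose_add, hM, hJH]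
  have key : A * J * A = A + A := by
    have expand : A * J * A = M * J * M + M * (J * J) + (J * J) * M + (J * J) * J := by
      rw [hA]; noncomm_ring
    rw [expand, h, hJ2]
    rw [hA]; noncomm_ring
  set w : Fin p ⊕ Fin q → ℂ := J *ᵥ v with hw
  have key2 : A *ᵥ w = (2:ℂ) • v := by
    have e1 : (A * J * A) *ᵥ v = (lam : ℂ) • (A *ᵥ w) := by
      rw [← Matrix.mulVec_mulVec, ← Matrix.mulVec_mulVec, heig, Matrix.mulVec_smul,
        Matrix.mulVec_smul]
    have e2 : (A * J * A) *ᵥ v = (lam : ℂ) • ((2:ℂ) • v) := by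
      rw [key, Matrix.add_mulVec, heig, two_smul, smul_add]
    have := e1.symm.trans e2
    have hl : (lam : ℂ) ≠ 0 := by exact_mod_cast Complex.ofReal_ne_zero.mpr hlam
    exact smul_right_injective _ hl this
  -- pair with v
  have c1 : star v ⬝ᵥ (A *ᵥ w) = (2:ℂ) * (star v ⬝ᵥ v) := by
    rw [key2, dotProduct_smul, smul_eq_mul]
  have c2 : star v ⬝ᵥ (A *ᵥ w) = (lam : ℂ) * (star v ⬝ᵥ w) := by
    rw [Matrix.dotProduct_mulVec]
    have : star v ᵥ* A = (lam : ℂ) • star v := by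
      rw [← hAH, ← Matrix.star_mulVec, heig, star_smul]
      simp
    rw [this, smul_dotProduct, smul_eq_mul]
  set e : Fin p ⊕ Fin q → ℝ := Sum.elim (fun _ => 1) (fun _ => -1) with he
  have hwi : ∀ i, w i = (e i : ℂ) * v i := by
    intro i
    rw [hw, hJdiag, Matrix.mulVec_diagonal]
    cases i <;> simp [he]
  set S : ℝ := ∑ i, Complex.normSq (v i) with hS
  set T : ℝ := ∑ i, e i * Complex.normSq (v i) with hT
  have hvv : star v ⬝ᵥ v = (S : ℂ) := by
    rw [hS, dotProduct]
    push_cast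
    refine Finset.sum_congr rfl fun i _ => ?_
    simp [Complex.normSq_eq_conj_mul_self]
  have hvw : star v ⬝ᵥ w = (T : ℂ) := by
    rw [hT, dotProduct]
    push_cast
    refine Finset.sum_congr rfl fun i _ => ?_
    rw [hwi i]
    simp [Complex.normSq_eq_conj_mul_self]
    ring
  have main : lam * T = 2 * S := by
    have : (lam : ℂ) * (T : ℂ) = (2:ℂ) * (S : ℂ) := by
      rw [← hvw, ← hvv, ← c2, c1]
    exact_mod_cast this
  have hSpos : 0 < S := by
    rw [hS]
    obtain ⟨i, hi⟩ : ∃ i, v i ≠ 0 := by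
      by_contra hcon
      push_neg at hcon
      exact hv (funext hcon)
    refine Finset.sum_pos' (fun j _ => Complex.normSq_nonneg _) ⟨i, Finset.mem_univ i, ?_⟩
    exact Complex.normSq_pos.mpr hi
  have hTS : |T| ≤ S := by
    rw [hT, hS]
    refine le_trans (Finset.abs_sum_le_sum_abs _ _) (Finset.sum_le_sum fun i _ => ?_)
    rw [abs_mul]
    have : |e i| = 1 := by cases i <;> simp [he]
    rw [this, one_mul, abs_of_nonneg (Complex.normSq_nonneg _)]
  have h2S : 2 * S = |lam| * |T| := by
    rw [← abs_mul, main, abs_of_nonneg (by positivity)]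
  have : 2 * S ≤ |lam| * S := h2S.le.trans (by
    exact mul_le_mul_of_nonneg_left hTS (abs_nonneg _))
  exact le_of_mul_le_mul_right (by linarith [this]) hSpos
end

section
/- If M ∈ U_s(1,1) has nonzero off-diagonal entry, then the two diagonal entries of M are equal, and M is equivalent (under conjugation by diag(u,v) with |u|=|v|=1, together with multiplication by ±1) to M_t = [[cosh t, sinh t],[sinh t, cosh t]] for some t ≥ 0. -/
/-!
Write the Hermitian matrix as `!![a, b; star b, d]` with `a, d` real. The off-diagonal entry of
`M J M = J` reads `(a - d) b = 0`, so `a = d`, and the diagonal one reads `a² - ‖b‖² = 1`.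
Hence `|a| = cosh t` and `‖b‖ = sinh t` for `t = arsinh ‖b‖`; writing `b = ‖b‖ w` with `‖w‖ = 1`
and `ε = ±1` for the sign of `a`, conjugation by `diagonal ![1, ε w]` carries `M_t` to `ε M`.
-/

open Matrix

lemma Real.exists_cosh_sinh_of_sq_sub_sq_eq_one {a x : ℝ} (hx : 0 ≤ x) (h : a ^ 2 - x ^ 2 = 1) :
    ∃ t : ℝ, 0 ≤ t ∧ Real.cosh t = |a| ∧ Real.sinh t = x := by
  refine ⟨Real.arsinh x, Real.arsinh_nonneg_iff.mpr hx, ?_, Real.sinh_arsinh x⟩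
  rw [Real.cosh_arsinh, ← Real.sqrt_sq_eq_abs]
  congr 1
  linarith

lemma exists_sign_smul_diagonal_conj_cosh_sinh {a : ℝ} {b : ℂ} (h : a ^ 2 - ‖b‖ ^ 2 = 1) :
    ∃ t : ℝ, 0 ≤ t ∧ ∃ u v ε : ℂ, ‖u‖ = 1 ∧ ‖v‖ = 1 ∧ (ε = 1 ∨ ε = -1) ∧
      !![(a : ℂ), b; star b, (a : ℂ)] = ε • ((Matrix.diagonal ![u, v])ᴴ *
        !![(Real.cosh t : ℂ), (Real.sinh t : ℂ); (Real.sinh t : ℂ), (Real.cosh t : ℂ)] *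
        Matrix.diagonal ![u, v]) := by
  obtain ⟨t, ht, hcosh, hsinh⟩ := Real.exists_cosh_sinh_of_sq_sub_sq_eq_one (norm_nonneg b) h
  set w := Complex.exp (b.arg * Complex.I)
  have hw : ‖w‖ = 1 := Complex.norm_exp_ofReal_mul_I _
  have hb : (‖b‖ : ℂ) * w = b := Complex.norm_mul_exp_arg_mul_I b
  have hww : starRingEnd ℂ w * w = 1 := by
    rw [Complex.conj_mul', hw]
    norm_num
  obtain ⟨ε, hε, hεa⟩ : ∃ ε : ℂ, (ε = 1 ∨ ε = -1) ∧ (a : ℂ) = ε * |a| := by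
    rcases abs_choice a with ha | ha
    · exact ⟨1, .inl rfl, by rw [ha, one_mul]⟩
    · exact ⟨-1, .inr rfl, by rw [ha]; push_cast; ring⟩
  have hεε : ε * ε = 1 := by rcases hε with rfl | rfl <;> norm_num
  have hεconj : starRingEnd ℂ ε = ε := by rcases hε with rfl | rfl <;> simp
  refine ⟨t, ht, 1, ε * w, ε, norm_one, ?_, hε, ?_⟩
  · rcases hε with rfl | rfl <;> simp [hw]
  · rw [← hb]
    ext i j
    fin_cases i <;> fin_cases j <;>
      simp only [Matrix.smul_apply, mul_diagonal, diagonal_mul, diagonal_conjTranspose,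
        Pi.star_apply, of_apply, cons_val', cons_val_zero, cons_val_one, cons_val_fin_one,
        Fin.zero_eta, Fin.mk_one, star_mul', RCLike.star_def, Complex.conj_ofReal, star_one,
        one_mul, mul_one, smul_eq_mul, hcosh, hsinh, hεconj]
    · exact hεa
    · linear_combination (-‖b‖ * w : ℂ) * hεε
    · linear_combination (-(starRingEnd ℂ w * ‖b‖) : ℂ) * hεε
    · linear_combination hεa - (ε * |a| : ℂ) * hww - (ε * |a| * starRingEnd ℂ w * w : ℂ) * hεε

lemma Matrix.mul_diag_one_neg_one_mul_fin_two {R : Type*} [CommRing R]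
    (M : Matrix (Fin 2) (Fin 2) R) :
    M * !![1, 0; 0, -1] * M =
      !![M 0 0 ^ 2 - M 0 1 * M 1 0, (M 0 0 - M 1 1) * M 0 1;
        (M 0 0 - M 1 1) * M 1 0, M 1 0 * M 0 1 - M 1 1 ^ 2] := by
  rw [M.eta_fin_two]
  ext i j
  fin_cases i <;> fin_cases j <;> simp <;> ring

theorem selfAdjoint_pseudoUnitary_offdiag_ne_zero (M : Matrix (Fin 2) (Fin 2) ℂ)
    (hM : Mᴴ = M)
    (h : M * !![1, 0; 0, -1] * M = !![1, 0; 0, -1])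
    (hoff : M 0 1 ≠ 0) :
    M 0 0 = M 1 1 ∧
    ∃ t : ℝ, 0 ≤ t ∧ ∃ u v ε : ℂ, ‖u‖ = 1 ∧ ‖v‖ = 1 ∧ (ε = 1 ∨ ε = -1) ∧
      M = ε • ((Matrix.diagonal ![u, v])ᴴ *
        !![(Real.cosh t : ℂ), (Real.sinh t : ℂ); (Real.sinh t : ℂ), (Real.cosh t : ℂ)] *
        Matrix.diagonal ![u, v]) := by
  rw [mul_diag_one_neg_one_mul_fin_two] at h
  have h00 : M 0 0 ^ 2 - M 0 1 * M 1 0 = 1 := by simpa using congrFun₂ h 0 0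
  have h01 : (M 0 0 - M 1 1) * M 0 1 = 0 := by simpa using congrFun₂ h 0 1
  have hdiag : M 0 0 = M 1 1 := sub_eq_zero.mp ((mul_eq_zero.mp h01).resolve_right hoff)
  refine ⟨hdiag, ?_⟩
  set a := (M 0 0).re
  have ha : (a : ℂ) = M 0 0 := IsHermitian.coe_re_apply_self hM 0
  have hb : star (M 0 1) = M 1 0 := IsHermitian.apply hM 1 0
  have hnorm : a ^ 2 - ‖M 0 1‖ ^ 2 = 1 := by
    have : ((a ^ 2 - ‖M 0 1‖ ^ 2 : ℝ) : ℂ) = 1 := by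
      push_cast
      rw [ha, ← Complex.mul_conj', ← Complex.star_def, hb, h00]
    exact_mod_cast this
  have hMform : M = !![(a : ℂ), M 0 1; star (M 0 1), (a : ℂ)] := by
    ext i j
    fin_cases i <;> fin_cases j <;> simp [ha, hb, hdiag]
  rw [hMform]
  exact exists_sign_smul_diagonal_conj_cosh_sinh hnorm
end

section
/- Let z_1,…,z_k be orthonormal vectors in ℂ^n (n = p+q) and λ_1,…,λ_k nonzero reals, and set M = Σ_j λ_j z_j z_j* − I_{p,q}. Then M I_{p,q} M = I_{p,q} holds if and only if z_i* I_{p,q} z_j = 0 for all i ≠ j and λ_j = 2/(z_j* I_{p,q} z_j) for all j (in particular z_j* I_{p,q} z_j ≠ 0). -/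
open Matrix

private lemma vecMulVec_mulVec' {n : Type*} [Fintype n] (w v x : n → ℂ) :
    Matrix.vecMulVec w v *ᵥ x = (v ⬝ᵥ x) • w := by
  funext a
  simp only [Matrix.mulVec, Matrix.vecMulVec_apply, dotProduct, Pi.smul_apply,
    smul_eq_mul, Finset.sum_mul]
  exact Finset.sum_congr rfl fun x' _ => by ring

private lemma vecMulVec_mul' {n : Type*} [Fintype n] (w v : n → ℂ)
    (B : Matrix n n ℂ) :
    Matrix.vecMulVec w v * B = Matrix.vecMulVec w (v ᵥ* B) := by
  ext a b
  simp [Matrix.mul_apply, Matrix.vecMulVec_apply, Matrix.vecMul, dotProduct,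
    Finset.mul_sum, mul_assoc]

private lemma vecMulVec_mul_vecMulVec' {n : Type*} [Fintype n] (a b c d : n → ℂ) :
    Matrix.vecMulVec a b * Matrix.vecMulVec c d = (b ⬝ᵥ c) • Matrix.vecMulVec a d := by
  ext i j
  simp only [Matrix.mul_apply, Matrix.vecMulVec_apply, Matrix.smul_apply, dotProduct,
    smul_eq_mul, Finset.sum_mul]
  exact Finset.sum_congr rfl fun x _ => by ring

private lemma sum_mulVec' {n : Type*} [Fintype n] {ι : Type*} (s : Finset ι)
    (B : ι → Matrix n n ℂ) (v : n → ℂ) :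
    (∑ i ∈ s, B i) *ᵥ v = ∑ i ∈ s, B i *ᵥ v := by
  ext a
  simp only [Finset.sum_apply, Matrix.mulVec, dotProduct, Matrix.sum_apply,
    Finset.sum_mul]
  rw [Finset.sum_comm]

private lemma dotProduct_sum' {n : Type*} [Fintype n] {ι : Type*} (s : Finset ι)
    (v : n → ℂ) (w : ι → (n → ℂ)) :
    v ⬝ᵥ (∑ i ∈ s, w i) = ∑ i ∈ s, v ⬝ᵥ w i := by
  simp only [dotProduct, Finset.sum_apply, Finset.mul_sum]
  rw [Finset.sum_comm]

theorem rank_one_decomposition_pseudoUnitary (p q k : ℕ)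
    (z : Fin k → (Fin p ⊕ Fin q → ℂ))
    (horth : ∀ i j, star (z i) ⬝ᵥ z j = if i = j then 1 else 0)
    (lam : Fin k → ℝ) (hlam : ∀ j, lam j ≠ 0) :
    ((∑ j, (lam j : ℂ) • Matrix.vecMulVec (z j) (star (z j)) - Matrix.fromBlocks 1 0 0 (-1)) *
        Matrix.fromBlocks 1 0 0 (-1) *
        (∑ j, (lam j : ℂ) • Matrix.vecMulVec (z j) (star (z j)) - Matrix.fromBlocks 1 0 0 (-1)) =
      Matrix.fromBlocks 1 0 0 (-1)) ↔
    ((∀ i j, i ≠ j →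
        star (z i) ⬝ᵥ ((Matrix.fromBlocks 1 0 0 (-1) : Matrix (Fin p ⊕ Fin q) (Fin p ⊕ Fin q) ℂ) *ᵥ z j) = 0) ∧
      ∀ j, (lam j : ℂ) =
        2 / (star (z j) ⬝ᵥ ((Matrix.fromBlocks 1 0 0 (-1) : Matrix (Fin p ⊕ Fin q) (Fin p ⊕ Fin q) ℂ) *ᵥ z j))) := by
  set J : Matrix (Fin p ⊕ Fin q) (Fin p ⊕ Fin q) ℂ := Matrix.fromBlocks 1 0 0 (-1) with hJ
  set A : Matrix (Fin p ⊕ Fin q) (Fin p ⊕ Fin q) ℂ :=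
    ∑ j, (lam j : ℂ) • Matrix.vecMulVec (z j) (star (z j)) with hA
  have hJ2 : J * J = 1 := by
    simp [hJ, Matrix.fromBlocks_multiply, ← Matrix.fromBlocks_one]
  set c : Fin k → Fin k → ℂ := fun i j => star (z i) ⬝ᵥ (J *ᵥ z j) with hc
  have h1 : A * J * J = A := by rw [mul_assoc, hJ2, mul_one]
  have h2j : J * J * A = A := by rw [hJ2, one_mul]
  have h3 : J * J * J = J := by rw [hJ2, one_mul]
  have expand : (A - J) * J * (A - J) = A * J * A - A - A + J := by
    simp only [sub_mul, mul_sub]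
    rw [h1, h2j, h3]
    abel
  have step1 : ((A - J) * J * (A - J) = J) ↔ A * J * A = (2 : ℂ) • A := by
    rw [expand, two_smul]
    constructor
    · intro h
      have h0 : A * J * A - A - A = 0 := by
        simpa using congrArg (· - J) h
      rwa [sub_sub, sub_eq_zero] at h0
    · intro h
      rw [h]; abel
  have AJ : A * J = ∑ i, (lam i : ℂ) • Matrix.vecMulVec (z i) (star (z i) ᵥ* J) := by
    rw [hA, Finset.sum_mul]
    refine Finset.sum_congr rfl fun i _ => ?_
    rw [Matrix.smul_mul, vecMulVec_mul']
  have AJA : A * J * A = ∑ i, ∑ j,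
      ((lam i : ℂ) * (lam j : ℂ) * c i j) • Matrix.vecMulVec (z i) (star (z j)) := by
    rw [AJ, hA, Finset.sum_mul]
    refine Finset.sum_congr rfl fun i _ => ?_
    rw [Finset.mul_sum]
    refine Finset.sum_congr rfl fun j _ => ?_
    rw [Matrix.smul_mul, Matrix.mul_smul, vecMulVec_mul_vecMulVec', smul_smul, smul_smul]
    congr 1
    have hcc : (star (z i) ᵥ* J) ⬝ᵥ z j = c i j := (Matrix.dotProduct_mulVec _ _ _).symm
    rw [hcc]
  have qvmv : ∀ (i j a b : Fin k),
      star (z a) ⬝ᵥ (Matrix.vecMulVec (z i) (star (z j)) *ᵥ z b) =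
        (if a = i then 1 else 0) * (if j = b then 1 else 0) := by
    intro i j a b
    rw [vecMulVec_mulVec', dotProduct_smul, horth a i, horth j b]
    simp [mul_comm]
  constructor
  · intro h
    have h2 : A * J * A = (2 : ℂ) • A := step1.mp h
    have key : ∀ a b : Fin k, (lam a : ℂ) * (lam b : ℂ) * c a b =
        (2 : ℂ) * (if a = b then (lam a : ℂ) else 0) := by
      intro a b
      have hq := congrArg (fun B => star (z a) ⬝ᵥ (B *ᵥ z b)) h2
      rw [AJA] at hq
      have lhs : star (z a) ⬝ᵥ ((∑ i, ∑ j,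
          ((lam i : ℂ) * (lam j : ℂ) * c i j) • Matrix.vecMulVec (z i) (star (z j))) *ᵥ z b) =
          (lam a : ℂ) * (lam b : ℂ) * c a b := by
        rw [sum_mulVec', dotProduct_sum']
        have : ∀ i : Fin k, star (z a) ⬝ᵥ ((∑ j,
            ((lam i : ℂ) * (lam j : ℂ) * c i j) • Matrix.vecMulVec (z i) (star (z j))) *ᵥ z b) =
            ∑ j, ((lam i : ℂ) * (lam j : ℂ) * c i j) *
              ((if a = i then 1 else 0) * (if j = b then 1 else 0)) := by
          intro i
          rw [sum_mulVec', dotProduct_sum']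
          refine Finset.sum_congr rfl fun j _ => ?_
          rw [Matrix.smul_mulVec, dotProduct_smul, qvmv, smul_eq_mul]
        rw [Finset.sum_congr rfl fun i _ => this i]
        simp [mul_ite, ite_mul]
      have rhs : star (z a) ⬝ᵥ (((2 : ℂ) • A) *ᵥ z b) =
          (2 : ℂ) * (if a = b then (lam a : ℂ) else 0) := by
        rw [Matrix.smul_mulVec, dotProduct_smul, hA, sum_mulVec',
          dotProduct_sum', smul_eq_mul]
        congr 1
        have : ∀ i : Fin k,
            star (z a) ⬝ᵥ (((lam i : ℂ) • Matrix.vecMulVec (z i) (star (z i))) *ᵥ z b) =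
            (lam i : ℂ) * ((if a = i then 1 else 0) * (if i = b then 1 else 0)) := by
          intro i
          rw [Matrix.smul_mulVec, dotProduct_smul, qvmv, smul_eq_mul]
        rw [Finset.sum_congr rfl fun i _ => this i]
        by_cases hab : a = b
        · subst hab; simp [mul_ite, ite_mul]
        · simp [mul_ite, ite_mul, hab]
      rw [← lhs, ← rhs]
      exact hq
    constructor
    · intro i j hij
      have hk := key i j
      rw [if_neg hij, mul_zero] at hk
      have hli : (lam i : ℂ) ≠ 0 := Complex.ofReal_ne_zero.mpr (hlam i)
      have hlj : (lam j : ℂ) ≠ 0 := Complex.ofReal_ne_zero.mpr (hlam j)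
      have hcz : c i j = 0 := by
        rcases mul_eq_zero.mp hk with h' | h'
        · exact absurd (mul_eq_zero.mp h') (by tauto)
        · exact h'
      exact hcz
    · intro j
      have hk := key j j
      rw [if_pos rfl] at hk
      have hlj : (lam j : ℂ) ≠ 0 := Complex.ofReal_ne_zero.mpr (hlam j)
      have hcjj : (lam j : ℂ) * c j j = 2 := by
        have := mul_left_cancel₀ hlj (by linear_combination hk :
          (lam j : ℂ) * ((lam j : ℂ) * c j j) = (lam j : ℂ) * 2)
        exact this
      have hc0 : c j j ≠ 0 := by
        intro h0
        rw [h0, mul_zero] at hcjj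
        norm_num at hcjj
      rw [eq_div_iff hc0]
      exact hcjj
  · rintro ⟨hoff, hdiag⟩
    apply step1.mpr
    have hc0 : ∀ j, c j j ≠ 0 := by
      intro j h0
      have hd := hdiag j
      rw [show star (z j) ⬝ᵥ (J *ᵥ z j) = c j j from rfl] at hd
      rw [h0] at hd
      simp at hd
      exact hlam j (by exact_mod_cast hd)
    have hlc : ∀ j, (lam j : ℂ) * c j j = 2 := by
      intro j
      have hd := hdiag j
      rw [show star (z j) ⬝ᵥ (J *ᵥ z j) = c j j from rfl] at hd
      rw [hd, div_mul_cancel₀]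
      exact hc0 j
    rw [AJA, hA, Finset.smul_sum]
    refine Finset.sum_congr rfl fun i _ => ?_
    rw [Finset.sum_eq_single i]
    · rw [smul_smul]
      congr 1
      have hre : (lam i : ℂ) * (lam i : ℂ) * c i i = (lam i : ℂ) * ((lam i : ℂ) * c i i) := by
        ring
      rw [hre, hlc i]; ring
    · intro j _ hj
      have hz : c i j = 0 := hoff i j fun h => hj h.symm
      rw [hz, mul_zero, zero_smul]
    · simp
end
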